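/- Let T be a triangulated category and S a full additive subcategory of T such that Hom(S, S'[k]) = 0 for all S, S' ∈ S and k > 0, and such that S generates T as a triangulated category. Then S is the coheart of a unique bounded co-t-structure on T. -/

import Mathlib

/-!
Write `extShiftsLE S b` for the iterated extensions of the shifts `s⟦k⟧`, `s ∈ S`, `k ≤ b`.
The co-t-structure has `T_{≥0}` the retracts of `extShiftsLE S 0` and `T_{≤0}` the right
orthogonal of `extShiftsLE S (-1)`; presilting makes `extShiftsLE S b` left orthogonal to the
iterated extensions of the `s⟦k⟧`, `k > b`. The decomposition triangle of `X` is the cone of an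
approximation `A ⟶ X` with `A ∈ extShiftsLE S (-1)`, surjective on maps from that class and
injective on maps from `extShiftsLE S (-2)`. Approximations exist for objects of `S`, and are
inherited by shifts and, by a five-lemma argument, by extensions; as `S` generates, they exist
everywhere. The coheart is `S` because every map from an object of `extShiftsLE S 0` to `T_{≤0}`
factors through a finite sum of objects of `S`.

For uniqueness, a co-t-structure is determined by `T_{≥0}`. If `t` is bounded with coheart `S`
and `X ∈ T_{≥0}` has `X⟦n⟧ ∈ T_{≤0}`, the decomposition triangle of `X` exhibits it as an extension
of an object of `S` by some `A` with `A⟦1⟧` of the same kind for `n - 1`; by induction on `n`,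
`X` is a retract of an object of `extShiftsLE S 0`.
-/

open CategoryTheory CategoryTheory.Limits CategoryTheory.Pretriangulated ZeroObject

/-- A co-t-structure on a triangulated category `C`: a pair `(ge, le)` of classes of
objects (`ge` playing the role of `T_{≥0}` and `le` of `T_{≤0}`), closed under direct
summands, with `T_{≥0}[-1] ⊆ T_{≥0}`, `T_{≤0}[1] ⊆ T_{≤0}`,
`Hom(T_{≥0}[-1], T_{≤0}) = 0`, and such that every object `X` fits into a distinguished
triangle `A → X → B → A[1]` with `A ∈ T_{≥0}[-1]` and `B ∈ T_{≤0}`. -/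
structure CoTStructure (C : Type*) [Category C] [Preadditive C] [HasZeroObject C]
    [HasShift C ℤ] [∀ n : ℤ, (CategoryTheory.shiftFunctor C n).Additive]
    [Pretriangulated C] where
  ge : Set C
  le : Set C
  ge_summand : ∀ {X Y : C}, X ∈ ge → (∃ (i : Y ⟶ X) (r : X ⟶ Y), i ≫ r = 𝟙 Y) → Y ∈ ge
  le_summand : ∀ {X Y : C}, X ∈ le → (∃ (i : Y ⟶ X) (r : X ⟶ Y), i ≫ r = 𝟙 Y) → Y ∈ le
  ge_shift : ∀ X ∈ ge, X⟦(-1 : ℤ)⟧ ∈ ge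
  le_shift : ∀ X ∈ le, X⟦(1 : ℤ)⟧ ∈ le
  hom_zero : ∀ X : _, X⟦(1 : ℤ)⟧ ∈ ge → ∀ Y ∈ le, ∀ f : X ⟶ Y, f = 0
  exists_triangle : ∀ X : C, ∃ (A B : C) (f : A ⟶ X) (g : X ⟶ B) (h : B ⟶ A⟦(1 : ℤ)⟧),
    A⟦(1 : ℤ)⟧ ∈ ge ∧ B ∈ le ∧ Triangle.mk f g h ∈ distinguishedTriangles

variable {C : Type*} [Category C] [Preadditive C] [HasZeroObject C]
    [HasShift C ℤ] [∀ n : ℤ, (CategoryTheory.shiftFunctor C n).Additive]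
    [Pretriangulated C]

/-- A co-t-structure is bounded if every object lies in some `T_{≥n}` and some
`T_{≤m}` (where `X ∈ T_{≥n} ↔ X⟦n⟧ ∈ T_{≥0}` and `X ∈ T_{≤m} ↔ X⟦m⟧ ∈ T_{≤0}`). -/
def CoTStructure.bounded (t : CoTStructure C) : Prop :=
  ∀ X : C, (∃ n : ℤ, X⟦n⟧ ∈ t.ge) ∧ (∃ n : ℤ, X⟦n⟧ ∈ t.le)

/-- The coheart of a co-t-structure. -/
def CoTStructure.coheart (t : CoTStructure C) : Set C := t.ge ∩ t.le


namespace CategoryTheory.ObjectProperty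

section

variable {D : Type*} [Category D] [HasZeroMorphisms D] {P : ObjectProperty D}

instance : P.rightOrthogonal.IsStableUnderRetracts where
  of_retract r hY X f hX := by
    rw [← Category.comp_id f, ← r.retract, ← Category.assoc, hY (f ≫ r.i) hX, Limits.zero_comp]

lemma hom_eq_zero_of_retractClosure {X Y : D} (hX : P.retractClosure X)
    (hY : P.rightOrthogonal Y) (f : X ⟶ Y) : f = 0 := by
  obtain ⟨U, hU, ⟨r⟩⟩ := hX
  rw [← Category.id_comp f, ← r.retract, Category.assoc, hY (r.r ≫ f) hU, Limits.comp_zero]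

end

inductive extensionClosure (P : ObjectProperty C) : ObjectProperty C
  | of {X : C} : P X → extensionClosure P X
  | of_iso {X Y : C} : (X ≅ Y) → extensionClosure P X → extensionClosure P Y
  | ext (T : Triangle C) : T ∈ distTriang C → extensionClosure P T.obj₁ →
      extensionClosure P T.obj₃ → extensionClosure P T.obj₂

variable {P Q : ObjectProperty C}

instance : (extensionClosure P).IsClosedUnderIsomorphisms := ⟨.of_iso⟩

instance : (extensionClosure P).IsTriangulatedClosed₂ := .mk' .ext

lemma extensionClosure_le [Q.IsClosedUnderIsomorphisms] [Q.IsTriangulatedClosed₂] (h : P ≤ Q) :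
    extensionClosure P ≤ Q := by
  intro X hX
  induction hX with
  | of hX => exact h _ hX
  | of_iso e _ ih => exact Q.prop_of_iso e ih
  | ext T hT _ _ ih₁ ih₃ => exact Q.ext_of_isTriangulatedClosed₂ T hT ih₁ ih₃

lemma monotone_extensionClosure (h : P ≤ Q) : extensionClosure P ≤ extensionClosure Q :=
  extensionClosure_le fun X hX => .of (h X hX)

lemma extensionClosure_shift (m : ℤ) (h : ∀ X, P X → Q (X⟦m⟧)) {X : C}
    (hX : extensionClosure P X) : extensionClosure Q (X⟦m⟧) := by
  induction hX with
  | of hX => exact .of (h _ hX)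
  | of_iso e _ ih => exact .of_iso ((shiftFunctor C m).mapIso e) ih
  | ext T hT _ _ ih₁ ih₃ => exact .ext _ (Triangle.shift_distinguished T hT m) ih₁ ih₃

lemma extensionClosure_hom_eq_zero (h : ∀ X Y, P X → Q Y → ∀ f : X ⟶ Y, f = 0) {X Y : C}
    (hX : extensionClosure P X) (hY : extensionClosure Q Y) (f : X ⟶ Y) : f = 0 := by
  have hP : extensionClosure P ≤ Q.leftOrthogonal :=
    extensionClosure_le fun X hX Y g hY => h X Y hX hY g
  have hQ : extensionClosure Q ≤ (extensionClosure P).rightOrthogonal :=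
    extensionClosure_le fun Y hY X g hX => hP X hX g hY
  exact hQ Y hY f hX

end CategoryTheory.ObjectProperty

open ObjectProperty

namespace CoTStructure

variable (t : CoTStructure C)

def geProp : ObjectProperty C := fun X => X ∈ t.ge

def leProp : ObjectProperty C := fun X => X ∈ t.le

instance : t.geProp.IsStableUnderRetracts := ⟨fun r hX => t.ge_summand hX ⟨r.i, r.r, r.retract⟩⟩

instance : t.leProp.IsStableUnderRetracts := ⟨fun r hX => t.le_summand hX ⟨r.i, r.r, r.retract⟩⟩

instance : t.geProp.IsClosedUnderIsomorphisms := ⟨fun e => prop_of_retract _ (.ofIso e.symm)⟩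

instance : t.leProp.IsClosedUnderIsomorphisms := ⟨fun e => prop_of_retract _ (.ofIso e.symm)⟩

lemma leProp_eq_rightOrthogonal : t.leProp = (t.geProp.shift (1 : ℤ)).rightOrthogonal := by
  ext Y
  refine ⟨fun hY X f hX => t.hom_zero X hX Y hY f, fun hY => ?_⟩
  obtain ⟨A, B, f, g, h, hA, hB, hT⟩ := t.exists_triangle Y
  obtain ⟨r, hr⟩ := Triangle.yoneda_exact₂ _ hT (𝟙 Y)
    (show f ≫ 𝟙 Y = 0 by rw [Category.comp_id]; exact hY f hA)
  exact prop_of_retract t.leProp ⟨g, r, hr.symm⟩ hB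

lemma geProp_eq_leftOrthogonal : t.geProp = (t.leProp.shift (-1 : ℤ)).leftOrthogonal := by
  ext X
  refine ⟨fun hX Y f hY => ?_, fun hX => ?_⟩
  · have hX' : t.geProp ((X⟦(-1 : ℤ)⟧)⟦(1 : ℤ)⟧) :=
      t.geProp.prop_of_iso (shiftNegShift X (1 : ℤ)).symm hX
    exact (shiftFunctor C (-1 : ℤ)).map_eq_zero_iff.1 (t.hom_zero _ hX' _ hY _)
  · obtain ⟨A, B, f, g, h, hA, hB, hT⟩ := t.exists_triangle (X⟦(-1 : ℤ)⟧)
    have hg : g = 0 := by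
      have := hX ((shiftNegShift X (1 : ℤ)).inv ≫ g⟦(1 : ℤ)⟧')
        (t.leProp.prop_of_iso (shiftShiftNeg B (1 : ℤ)).symm hB)
      rw [Preadditive.IsIso.comp_left_eq_zero] at this
      exact (shiftFunctor C (1 : ℤ)).map_eq_zero_iff.1 this
    obtain ⟨r, hr⟩ := Triangle.coyoneda_exact₂ _ hT (𝟙 _)
      (show 𝟙 _ ≫ g = 0 by rw [Category.id_comp]; exact hg)
    exact prop_of_retract t.geProp ((Retract.ofIso (shiftNegShift X (1 : ℤ)).symm).trans
      (Retract.map ⟨r, f, hr.symm⟩ (shiftFunctor C (1 : ℤ)))) hA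

instance : t.leProp.IsTriangulatedClosed₂ := by rw [leProp_eq_rightOrthogonal]; infer_instance

instance : t.geProp.IsTriangulatedClosed₂ := by rw [geProp_eq_leftOrthogonal]; infer_instance

lemma shift_mem_le_of_le {X : C} {m n : ℤ} (hmn : m ≤ n) (hX : X⟦m⟧ ∈ t.le) : X⟦n⟧ ∈ t.le := by
  induction n, hmn using Int.leInduction with
  | base => exact hX
  | succ n _ ih =>
    exact t.leProp.prop_of_iso ((shiftFunctorAdd' C n 1 (n + 1) rfl).app X).symm (t.le_shift _ ih)

lemma shift_mem_le {X : C} (hX : X ∈ t.le) {n : ℤ} (hn : 0 ≤ n) : X⟦n⟧ ∈ t.le :=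
  t.shift_mem_le_of_le hn (t.leProp.prop_of_iso ((shiftFunctorZero C ℤ).app X).symm hX)

lemma shift_mem_ge {X : C} (hX : X ∈ t.ge) {n : ℤ} (hn : n ≤ 0) : X⟦n⟧ ∈ t.ge := by
  induction n, hn using Int.leInductionDown with
  | base => exact t.geProp.prop_of_iso ((shiftFunctorZero C ℤ).app X).symm hX
  | pred n _ ih =>
    exact t.geProp.prop_of_iso ((shiftFunctorAdd' C n (-1) (n - 1) (by ring)).app X).symm
      (t.ge_shift _ ih)

lemma ext_of_ge_eq {t t' : CoTStructure C} (h : t.ge = t'.ge) : t = t' := by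
  have hle : t.le = t'.le := by
    change t.leProp = t'.leProp
    rw [leProp_eq_rightOrthogonal, leProp_eq_rightOrthogonal]
    exact congrArg (fun P : ObjectProperty C => (P.shift (1 : ℤ)).rightOrthogonal) h
  cases t
  cases t'
  cases h
  cases hle
  rfl

end CoTStructure

section Shifts

variable (S : Set C)

def shiftsIn (I : Set ℤ) : ObjectProperty C := fun X => ∃ s ∈ S, ∃ k ∈ I, Nonempty (X ≅ s⟦k⟧)

abbrev extShiftsLE (b : ℤ) : ObjectProperty C := (shiftsIn S (Set.Iic b)).extensionClosure

abbrev extShiftsGE (a : ℤ) : ObjectProperty C := (shiftsIn S (Set.Ici a)).extensionClosure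

variable {S}

section

omit [Preadditive C] [HasZeroObject C] [∀ n : ℤ, (shiftFunctor C n).Additive] [Pretriangulated C]

lemma shiftsIn_shift {I J : Set ℤ} {m : ℤ} (h : ∀ k ∈ I, k + m ∈ J) {X : C}
    (hX : shiftsIn S I X) : shiftsIn S J (X⟦m⟧) := by
  obtain ⟨s, hs, k, hk, ⟨e⟩⟩ := hX
  exact ⟨s, hs, k + m, h k hk,
    ⟨(shiftFunctor C m).mapIso e ≪≫ ((shiftFunctorAdd' C k m (k + m) rfl).app s).symm⟩⟩

lemma monotone_shiftsIn {I J : Set ℤ} (h : I ⊆ J) : shiftsIn S I ≤ shiftsIn S J :=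
  fun _ ⟨s, hs, k, hk, e⟩ => ⟨s, hs, k, h hk, e⟩

lemma shiftsIn_of_mem {s : C} (hs : s ∈ S) {I : Set ℤ} (h : 0 ∈ I) : shiftsIn S I s :=
  ⟨s, hs, 0, h, ⟨((shiftFunctorZero C ℤ).app s).symm⟩⟩

end

lemma extShiftsLE_shift {b b' m : ℤ} (h : b + m ≤ b') {X : C} (hX : extShiftsLE S b X) :
    extShiftsLE S b' (X⟦m⟧) :=
  extensionClosure_shift m (fun _ => shiftsIn_shift fun k hk => Set.mem_Iic.2 <| by
    have := Set.mem_Iic.1 hk; omega) hX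

lemma extShiftsGE_shift {a a' m : ℤ} (h : a' ≤ a + m) {X : C} (hX : extShiftsGE S a X) :
    extShiftsGE S a' (X⟦m⟧) :=
  extensionClosure_shift m (fun _ => shiftsIn_shift fun k hk => Set.mem_Ici.2 <| by
    have := Set.mem_Ici.1 hk; omega) hX

lemma extShiftsLE_mono {b b' : ℤ} (h : b ≤ b') : extShiftsLE S b ≤ extShiftsLE S b' :=
  monotone_extensionClosure (monotone_shiftsIn (Set.Iic_subset_Iic.2 h))

lemma extShiftsGE_mono {a a' : ℤ} (h : a' ≤ a) : extShiftsGE S a ≤ extShiftsGE S a' :=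
  monotone_extensionClosure (monotone_shiftsIn (Set.Ici_subset_Ici.2 h))

lemma extShiftsLE_of_mem {s : C} (hs : s ∈ S) {b : ℤ} (hb : 0 ≤ b) : extShiftsLE S b s :=
  .of (shiftsIn_of_mem hs hb)

lemma extShiftsGE_of_mem {s : C} (hs : s ∈ S) {a : ℤ} (ha : a ≤ 0) : extShiftsGE S a s :=
  .of (shiftsIn_of_mem hs ha)

lemma extShiftsLE_prop_zero (hzero : (0 : C) ∈ S) (b : ℤ) : extShiftsLE S b 0 :=
  .of ⟨0, hzero, b, Set.mem_Iic.2 le_rfl, ⟨(shiftFunctor C b).mapZeroObject.symm⟩⟩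

lemma retractClosure_extShiftsLE_shift {b b' m : ℤ} (h : b + m ≤ b') {X : C}
    (hX : (extShiftsLE S b).retractClosure X) : (extShiftsLE S b').retractClosure (X⟦m⟧) := by
  obtain ⟨U, hU, ⟨r⟩⟩ := hX
  exact ⟨U⟦m⟧, extShiftsLE_shift h hU, ⟨r.map (shiftFunctor C m)⟩⟩

end Shifts

def IsPresilting (S : Set C) : Prop :=
  ∀ X ∈ S, ∀ Y ∈ S, ∀ k : ℤ, 0 < k → ∀ f : X ⟶ Y⟦k⟧, f = 0

namespace IsPresilting

variable {S : Set C} (hS : IsPresilting S)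
include hS

omit [HasZeroObject C] [Pretriangulated C] in
lemma shift_hom_eq_zero {s s' : C} (hs : s ∈ S) (hs' : s' ∈ S) {k j : ℤ} (h : k < j)
    (f : s⟦k⟧ ⟶ s'⟦j⟧) : f = 0 := by
  have := hS s hs s' hs' (j - k) (by omega) ((shiftShiftNeg s k).inv ≫ f⟦-k⟧' ≫
    ((shiftFunctorAdd' C j (-k) (j - k) (by ring)).app s').inv)
  rw [Preadditive.IsIso.comp_left_eq_zero, Preadditive.IsIso.comp_right_eq_zero] at this
  exact (shiftFunctor C (-k)).map_eq_zero_iff.1 this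

lemma hom_eq_zero {a b : ℤ} (hba : b < a) {X Y : C} (hX : extShiftsLE S b X)
    (hY : extShiftsGE S a Y) (f : X ⟶ Y) : f = 0 := by
  refine extensionClosure_hom_eq_zero ?_ hX hY f
  rintro X Y ⟨s, hs, k, hk, ⟨e⟩⟩ ⟨s', hs', j, hj, ⟨e'⟩⟩ f
  have hkj : k < j := (Set.mem_Iic.1 hk).trans_lt (hba.trans_le (Set.mem_Ici.1 hj))
  have := hS.shift_hom_eq_zero hs hs' hkj (e.inv ≫ f ≫ e'.hom)
  rwa [Preadditive.IsIso.comp_left_eq_zero, Preadditive.IsIso.comp_right_eq_zero] at this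

end IsPresilting

def GeneratesTriangulated (S : Set C) : Prop :=
  ∀ P : Set C, S ⊆ P →
    (∀ {X Y : C}, X ∈ P → Nonempty (X ≅ Y) → Y ∈ P) →
    (∀ X ∈ P, X⟦(1 : ℤ)⟧ ∈ P ∧ X⟦(-1 : ℤ)⟧ ∈ P) →
    (∀ T ∈ (distinguishedTriangles : Set (Triangle C)),
      T.obj₁ ∈ P → T.obj₃ ∈ P → T.obj₂ ∈ P) →
    ∀ X : C, X ∈ P

lemma GeneratesTriangulated.exists_extShiftsLE_and_extShiftsGE {S : Set C}
    (hgen : GeneratesTriangulated S) (X : C) :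
    (∃ b, extShiftsLE S b X) ∧ (∃ a, extShiftsGE S a X) := by
  refine hgen {X | (∃ b, extShiftsLE S b X) ∧ (∃ a, extShiftsGE S a X)}
    (fun s hs => ⟨⟨0, extShiftsLE_of_mem hs le_rfl⟩, ⟨0, extShiftsGE_of_mem hs le_rfl⟩⟩)
    ?_ ?_ ?_ X
  · rintro X Y ⟨⟨b, hb⟩, ⟨a, ha⟩⟩ ⟨e⟩
    exact ⟨⟨b, .of_iso e hb⟩, ⟨a, .of_iso e ha⟩⟩
  · rintro X ⟨⟨b, hb⟩, ⟨a, ha⟩⟩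
    exact ⟨⟨⟨b + 1, extShiftsLE_shift le_rfl hb⟩, ⟨a + 1, extShiftsGE_shift le_rfl ha⟩⟩,
      ⟨⟨b - 1, extShiftsLE_shift (by omega) hb⟩, ⟨a - 1, extShiftsGE_shift (by omega) ha⟩⟩⟩
  · rintro T hT ⟨⟨b₁, hb₁⟩, ⟨a₁, ha₁⟩⟩ ⟨⟨b₃, hb₃⟩, ⟨a₃, ha₃⟩⟩
    exact ⟨⟨max b₁ b₃, .ext T hT (extShiftsLE_mono (le_max_left _ _) _ hb₁)
        (extShiftsLE_mono (le_max_right _ _) _ hb₃)⟩,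
      ⟨min a₁ a₃, .ext T hT (extShiftsGE_mono (min_le_left _ _) _ ha₁)
        (extShiftsGE_mono (min_le_right _ _) _ ha₃)⟩⟩

section Approximation

variable (S : Set C)

/-- The cone of a level-`b` approximation is right orthogonal to `extShiftsLE S b`; the
injectivity condition one level down is what lets approximations pass to extensions. -/
structure IsApproximation (b : ℤ) {A Y : C} (g : A ⟶ Y) : Prop where
  mem : extShiftsLE S b A
  exists_lift : ∀ ⦃W : C⦄, extShiftsLE S b W → ∀ φ : W ⟶ Y, ∃ χ : W ⟶ A, χ ≫ g = φ
  eq_zero : ∀ ⦃V : C⦄, extShiftsLE S (b - 1) V → ∀ ψ : V ⟶ A, ψ ≫ g = 0 → ψ = 0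

variable {S}

namespace IsApproximation

lemma shift {b : ℤ} {A Y : C} {g : A ⟶ Y} (hg : IsApproximation S b g) (m : ℤ) {b' : ℤ}
    (h : b + m = b') : IsApproximation S b' (g⟦m⟧') := by
  let adj : shiftFunctor C (-m) ⊣ shiftFunctor C m := (shiftEquiv C m).symm.toAdjunction
  refine ⟨extShiftsLE_shift h.le hg.mem, fun W hW φ => ?_, fun V hV ψ hψ => ?_⟩
  · obtain ⟨χ, hχ⟩ := hg.exists_lift (extShiftsLE_shift (m := -m) (by omega) hW)
      ((adj.homEquiv W Y).symm φ)
    refine ⟨adj.homEquiv W A χ, ?_⟩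
    rw [← adj.homEquiv_naturality_right, hχ, Equiv.apply_symm_apply]
  · have := hg.eq_zero (extShiftsLE_shift (m := -m) (by omega) hV) ((adj.homEquiv V A).symm ψ)
      (by rw [← adj.homEquiv_naturality_right_symm, hψ, adj.homAddEquiv_symm_zero])
    simpa using congrArg (adj.homEquiv V A) this

lemma comp_iso {b : ℤ} {A Y Y' : C} {g : A ⟶ Y} (hg : IsApproximation S b g) (e : Y ≅ Y') :
    IsApproximation S b (g ≫ e.hom) where
  mem := hg.mem
  exists_lift W hW φ := by
    obtain ⟨χ, hχ⟩ := hg.exists_lift hW (φ ≫ e.inv)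
    exact ⟨χ, by rw [reassoc_of% hχ, e.inv_hom_id, Category.comp_id]⟩
  eq_zero V hV ψ hψ := hg.eq_zero hV ψ (by simpa using hψ =≫ e.inv)

lemma hom₂ {R T : Triangle C} (hR : R ∈ distTriang C) (hT : T ∈ distTriang C) (φ : R ⟶ T)
    {b : ℤ} (h₁ : IsApproximation S b φ.hom₁) (h₃ : IsApproximation S b φ.hom₃) :
    IsApproximation S b φ.hom₂ := by
  refine ⟨.ext R hR h₁.mem h₃.mem, fun W hW f => ?_, fun V hV ψ hψ => ?_⟩
  · obtain ⟨χ₃, hχ₃⟩ := h₃.exists_lift hW (f ≫ T.mor₂)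
    have hχ₃R : χ₃ ≫ R.mor₃ = 0 := (h₁.shift 1 rfl).eq_zero (by simpa using hW) _ (by
      rw [Category.assoc, φ.comm₃, reassoc_of% hχ₃, comp_distTriang_mor_zero₂₃ _ hT,
        Limits.comp_zero])
    obtain ⟨χ₂, hχ₂⟩ := Triangle.coyoneda_exact₃ R hR χ₃ hχ₃R
    have hf : (f - χ₂ ≫ φ.hom₂) ≫ T.mor₂ = 0 := by
      rw [Preadditive.sub_comp, Category.assoc, ← φ.comm₂, ← Category.assoc, ← hχ₂, hχ₃,
        sub_self]
    obtain ⟨ε, hε⟩ := Triangle.coyoneda_exact₂ T hT _ hf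
    obtain ⟨χ₁, hχ₁⟩ := h₁.exists_lift hW ε
    refine ⟨χ₂ + χ₁ ≫ R.mor₁, ?_⟩
    rw [Preadditive.add_comp, Category.assoc, φ.comm₁, ← Category.assoc, hχ₁, ← hε]
    abel
  · have hψ₃ : ψ ≫ R.mor₂ = 0 := h₃.eq_zero hV _ (by
      rw [Category.assoc, φ.comm₂, ← Category.assoc, hψ, Limits.zero_comp])
    obtain ⟨ψ₁, rfl⟩ := Triangle.coyoneda_exact₂ R hR ψ hψ₃
    have hψ₁ : (ψ₁ ≫ φ.hom₁) ≫ T.mor₁ = 0 := by rw [Category.assoc, ← φ.comm₁, ← Category.assoc, hψ]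
    let δR : R.obj₃⟦(-1 : ℤ)⟧ ⟶ R.obj₁ := R.invRotate.mor₁
    let δT : T.obj₃⟦(-1 : ℤ)⟧ ⟶ T.obj₁ := T.invRotate.mor₁
    obtain ⟨τ, hτ⟩ : ∃ τ, ψ₁ ≫ φ.hom₁ = τ ≫ δT :=
      Triangle.coyoneda_exact₂ _ (inv_rot_of_distTriang T hT) _ hψ₁
    obtain ⟨κ, hκ⟩ := (h₃.shift (-1) (by ring)).exists_lift hV τ
    have hcomm : δR ≫ φ.hom₁ = φ.hom₃⟦(-1 : ℤ)⟧' ≫ δT := ((invRotate C).map φ).comm₁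
    have hψ₁' : ψ₁ = κ ≫ δR := sub_eq_zero.1 <| h₁.eq_zero hV _ <| by
      rw [Preadditive.sub_comp, Category.assoc, hcomm, ← Category.assoc, hκ, ← hτ, sub_self]
    have hδR : δR ≫ R.mor₁ = 0 := comp_distTriang_mor_zero₁₂ _ (inv_rot_of_distTriang R hR)
    rw [hψ₁', Category.assoc, hδR, Limits.comp_zero]

end IsApproximation

lemma exists_isApproximation_obj₂ {T : Triangle C} (hT : T ∈ distTriang C) {b : ℤ} {A₁ A₃ : C}
    {g₁ : A₁ ⟶ T.obj₁} {g₃ : A₃ ⟶ T.obj₃} (h₁ : IsApproximation S b g₁)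
    (h₃ : IsApproximation S b g₃) : ∃ (A : C) (g : A ⟶ T.obj₂), IsApproximation S b g := by
  obtain ⟨ξ, hξ⟩ := (h₁.shift 1 rfl).exists_lift (extShiftsLE_mono (by omega) _ h₃.mem)
    (g₃ ≫ T.mor₃)
  obtain ⟨M, ι, π, hR⟩ := distinguished_cocone_triangle₂ ξ
  obtain ⟨g₂, hg₁, hg₂⟩ := complete_distinguished_triangle_morphism₂ _ T hR hT g₁ g₃ hξ
  exact ⟨M, g₂, IsApproximation.hom₂ hR hT (Triangle.homMk _ _ g₁ g₂ g₃ hg₁ hg₂ hξ) h₁ h₃⟩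

end Approximation

variable {S : Set C}

lemma exists_isApproximation_of_mem (hS : IsPresilting S) (hzero : (0 : C) ∈ S) {s : C}
    (hs : s ∈ S) (b : ℤ) : ∃ (A : C) (g : A ⟶ s), IsApproximation S b g := by
  rcases le_or_gt 0 b with hb | hb
  · exact ⟨s, 𝟙 s, extShiftsLE_of_mem hs hb, fun W _ φ => ⟨φ, Category.comp_id φ⟩,
      fun V _ ψ h => by rwa [Category.comp_id] at h⟩
  · refine ⟨0, 0, extShiftsLE_prop_zero hzero b, fun W hW φ => ⟨0, ?_⟩,
      fun V _ ψ _ => (isZero_zero C).eq_of_tgt ψ 0⟩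
    rw [Limits.zero_comp, hS.hom_eq_zero hb hW (extShiftsGE_of_mem hs le_rfl) φ]

lemma exists_isApproximation (hS : IsPresilting S) (hzero : (0 : C) ∈ S)
    (hgen : GeneratesTriangulated S) (Y : C) (b : ℤ) :
    ∃ (A : C) (g : A ⟶ Y), IsApproximation S b g := by
  refine hgen {Y | ∀ b, ∃ (A : C) (g : A ⟶ Y), IsApproximation S b g}
    (fun s hs => exists_isApproximation_of_mem hS hzero hs) ?_ ?_ ?_ Y b
  · rintro X Y hX ⟨e⟩ b
    obtain ⟨A, g, hg⟩ := hX b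
    exact ⟨A, g ≫ e.hom, hg.comp_iso e⟩
  · intro X hX
    refine ⟨fun b => ?_, fun b => ?_⟩
    · obtain ⟨A, g, hg⟩ := hX (b - 1)
      exact ⟨_, _, hg.shift 1 (by ring)⟩
    · obtain ⟨A, g, hg⟩ := hX (b + 1)
      exact ⟨_, _, hg.shift (-1) (by ring)⟩
  · intro T hT h₁ h₃ b
    obtain ⟨_, _, hg₁⟩ := h₁ b
    obtain ⟨_, _, hg₃⟩ := h₃ b
    exact exists_isApproximation_obj₂ hT hg₁ hg₃

variable (S) in
def siltingGE : Set C := {X | (extShiftsLE S 0).retractClosure X}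

variable (S) in
def siltingLE : Set C := {Y | (extShiftsLE S (-1)).rightOrthogonal Y}

lemma mem_siltingLE_of_extShiftsGE (hS : IsPresilting S) {Y : C} (hY : extShiftsGE S 0 Y) :
    Y ∈ siltingLE S :=
  fun _ f hW => hS.hom_eq_zero (by norm_num) hW hY f

variable (S) in
def siltingCoTStructure (hS : IsPresilting S) (hzero : (0 : C) ∈ S)
    (hgen : GeneratesTriangulated S) : CoTStructure C where
  ge := siltingGE S
  le := siltingLE S
  ge_summand hX := fun ⟨i, r, h⟩ => prop_of_retract (extShiftsLE S 0).retractClosure ⟨i, r, h⟩ hX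
  le_summand hY := fun ⟨i, r, h⟩ =>
    prop_of_retract (extShiftsLE S (-1)).rightOrthogonal ⟨i, r, h⟩ hY
  ge_shift _ hX := retractClosure_extShiftsLE_shift (by norm_num) hX
  le_shift Y hY W f hW := by
    let adj : shiftFunctor C (-1 : ℤ) ⊣ shiftFunctor C (1 : ℤ) :=
      (shiftEquiv C (1 : ℤ)).symm.toAdjunction
    rw [← (adj.homEquiv W Y).apply_symm_apply f,
      hY ((adj.homEquiv W Y).symm f) (extShiftsLE_shift (by norm_num) hW),
      adj.homAddEquiv_zero]
  hom_zero X hX Y hY f := hom_eq_zero_of_retractClosure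
    (prop_of_retract _ (.ofIso (shiftShiftNeg X (1 : ℤ)).symm)
      (retractClosure_extShiftsLE_shift (by norm_num) hX)) hY f
  exists_triangle X := by
    obtain ⟨A, g, hg⟩ := exists_isApproximation hS hzero hgen X (-1)
    obtain ⟨Q, e, d, hT⟩ := distinguished_cocone_triangle g
    refine ⟨A, Q, g, e, d, le_retractClosure _ _ (extShiftsLE_shift (by norm_num) hg.mem),
      fun W f hW => ?_, hT⟩
    have hdg : d ≫ g⟦(1 : ℤ)⟧' = 0 := comp_distTriang_mor_zero₃₁ _ hT
    have hge : g ≫ e = 0 := comp_distTriang_mor_zero₁₂ _ hT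
    have hfd : f ≫ d = 0 := (hg.shift 1 (b' := 0) (by norm_num)).eq_zero hW _ (by
      rw [Category.assoc, hdg, Limits.comp_zero])
    obtain ⟨ψ, rfl⟩ : ∃ ψ, f = ψ ≫ e := Triangle.coyoneda_exact₃ _ hT f hfd
    obtain ⟨χ, rfl⟩ := hg.exists_lift hW ψ
    rw [Category.assoc, hge, Limits.comp_zero]

lemma exists_preenvelope [HasBinaryBiproducts C] (hS : IsPresilting S) (hzero : (0 : C) ∈ S)
    (hsum : ∀ X ∈ S, ∀ Y ∈ S, (X ⊞ Y) ∈ S) {U : C} (hU : extShiftsLE S 0 U) :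
    ∃ s ∈ S, ∃ q : U ⟶ s, ∀ ⦃Y : C⦄, Y ∈ siltingLE S → ∀ ρ : U ⟶ Y, ∃ m : s ⟶ Y, q ≫ m = ρ := by
  induction hU with
  | of hU =>
    obtain ⟨s, hs, k, hk, ⟨e⟩⟩ := hU
    rcases (Set.mem_Iic.1 hk).lt_or_eq with hk | rfl
    · refine ⟨0, hzero, 0, fun Y hY ρ => ⟨0, ?_⟩⟩
      rw [Limits.zero_comp, hY ρ (.of ⟨s, hs, k, Set.mem_Iic.2 (by omega), ⟨e⟩⟩)]
    · let e' := e ≪≫ (shiftFunctorZero C ℤ).app s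
      exact ⟨s, hs, e'.hom, fun Y _ ρ => ⟨e'.inv ≫ ρ, e'.hom_inv_id_assoc ρ⟩⟩
  | of_iso e _ ih =>
    obtain ⟨s, hs, q, hq⟩ := ih
    refine ⟨s, hs, e.inv ≫ q, fun Y hY ρ => ?_⟩
    obtain ⟨m, hm⟩ := hq hY (e.hom ≫ ρ)
    exact ⟨m, by rw [Category.assoc, hm, e.inv_hom_id_assoc]⟩
  | ext T hT _ h₃ ih₁ ih₃ =>
    obtain ⟨s₁, hs₁, q₁, hq₁⟩ := ih₁
    obtain ⟨s₃, hs₃, q₃, hq₃⟩ := ih₃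
    let δ : T.obj₃⟦(-1 : ℤ)⟧ ⟶ T.obj₁ := T.invRotate.mor₁
    have hδ : δ ≫ q₁ = 0 := mem_siltingLE_of_extShiftsGE hS (extShiftsGE_of_mem hs₁ le_rfl)
      (δ ≫ q₁) (extShiftsLE_shift (by norm_num) h₃)
    obtain ⟨q₁', hq₁'⟩ : ∃ q₁', q₁ = T.mor₁ ≫ q₁' :=
      Triangle.yoneda_exact₂ _ (inv_rot_of_distTriang T hT) q₁ hδ
    refine ⟨s₁ ⊞ s₃, hsum _ hs₁ _ hs₃, biprod.lift q₁' (T.mor₂ ≫ q₃), fun Y hY ρ => ?_⟩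
    obtain ⟨m₁, hm₁⟩ := hq₁ hY (T.mor₁ ≫ ρ)
    obtain ⟨τ, hτ⟩ := Triangle.yoneda_exact₂ T hT (ρ - q₁' ≫ m₁) (by
      rw [Preadditive.comp_sub, ← Category.assoc, ← hq₁', hm₁, sub_self])
    obtain ⟨m₃, hm₃⟩ := hq₃ hY τ
    refine ⟨biprod.desc m₁ m₃, ?_⟩
    rw [biprod.lift_desc, Category.assoc, hm₃, ← hτ]
    abel

lemma coheart_siltingCoTStructure [HasBinaryBiproducts C] (hS : IsPresilting S)
    (hzero : (0 : C) ∈ S) (hgen : GeneratesTriangulated S)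
    (hsum : ∀ X ∈ S, ∀ Y ∈ S, (X ⊞ Y) ∈ S)
    (hsummand : ∀ {X Y : C}, X ∈ S → (∃ (i : Y ⟶ X) (r : X ⟶ Y), i ≫ r = 𝟙 Y) → Y ∈ S) :
    (siltingCoTStructure S hS hzero hgen).coheart = S := by
  ext X
  refine ⟨fun ⟨⟨U, hU, ⟨r⟩⟩, hX⟩ => ?_, fun hX =>
    ⟨le_retractClosure _ _ (extShiftsLE_of_mem hX le_rfl),
      mem_siltingLE_of_extShiftsGE hS (extShiftsGE_of_mem hX le_rfl)⟩⟩
  obtain ⟨s, hs, q, hq⟩ := exists_preenvelope hS hzero hsum hU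
  obtain ⟨m, hm⟩ := hq hX r.r
  exact hsummand hs ⟨r.i ≫ q, m, by rw [Category.assoc, hm, r.retract]⟩

lemma bounded_siltingCoTStructure (hS : IsPresilting S) (hzero : (0 : C) ∈ S)
    (hgen : GeneratesTriangulated S) : (siltingCoTStructure S hS hzero hgen).bounded := fun X => by
  obtain ⟨⟨b, hb⟩, ⟨a, ha⟩⟩ := hgen.exists_extShiftsLE_and_extShiftsGE X
  exact ⟨⟨-b, le_retractClosure _ _ (extShiftsLE_shift (by omega) hb)⟩,
    ⟨-a, mem_siltingLE_of_extShiftsGE hS (extShiftsGE_shift (by omega) ha)⟩⟩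

namespace CoTStructure

variable (t : CoTStructure C)

lemma extShiftsLE_zero_le_geProp (hS : S ⊆ t.ge) : extShiftsLE S 0 ≤ t.geProp :=
  extensionClosure_le fun _ ⟨_, hs, _, hk, ⟨e⟩⟩ =>
    t.geProp.prop_of_iso e.symm (t.shift_mem_ge (hS hs) hk)

lemma retractClosure_of_mem_ge (hco : t.coheart = S) {n : ℤ} (hn : 0 ≤ n) :
    ∀ X ∈ t.ge, X⟦n⟧ ∈ t.le → (extShiftsLE S 0).retractClosure X := by
  induction n, hn using Int.leInduction with
  | base =>
    intro X hX hX₀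
    have hXS : X ∈ S := hco ▸ ⟨hX, t.leProp.prop_of_iso ((shiftFunctorZero C ℤ).app X) hX₀⟩
    exact le_retractClosure _ _ (extShiftsLE_of_mem hXS le_rfl)
  | succ n hn ih =>
    intro X hX hXn
    obtain ⟨A, B, f, g, h, hA, hB, hT⟩ := t.exists_triangle X
    have hBS : B ∈ S := hco ▸
      ⟨t.geProp.ext_of_isTriangulatedClosed₂ _ (rot_of_distTriang _ hT) hX hA, hB⟩
    have hAn : A⟦(1 : ℤ)⟧⟦n⟧ ∈ t.le := t.leProp.ext_of_isTriangulatedClosed₂ _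
      (Triangle.shift_distinguished _ (rot_of_distTriang _ (rot_of_distTriang _ hT)) n)
      (t.shift_mem_le hB hn)
      (t.leProp.prop_of_iso ((shiftFunctorAdd' C 1 n (n + 1) (add_comm 1 n)).app X) hXn)
    have hA' : (extShiftsLE S 0).retractClosure A :=
      prop_of_retract _ (.ofIso (shiftShiftNeg A (1 : ℤ)).symm)
        (retractClosure_extShiftsLE_shift (m := -1) (by norm_num) (ih _ hA hAn))
    exact monotone_retractClosure (extensionProduct_le_of_isTriangulatedClosed₂ le_rfl le_rfl) X
      (extensionProduct_retractClosure_retractClosure_le _ _ X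
        ⟨A, B, f, g, h, hT, hA', le_retractClosure _ _ (extShiftsLE_of_mem hBS le_rfl)⟩)

lemma ge_eq_siltingGE (hbd : t.bounded) (hco : t.coheart = S) : t.ge = siltingGE S := by
  have hS : S ⊆ t.ge := by rw [← hco]; exact fun _ hX => hX.1
  ext X
  refine ⟨fun hX => ?_, fun hX => (retractClosure_le_iff _ t.geProp).2
    (t.extShiftsLE_zero_le_geProp hS) X hX⟩
  obtain ⟨n, hn⟩ := (hbd X).2
  exact t.retractClosure_of_mem_ge hco (le_max_right n 0) X hX
    (t.shift_mem_le_of_le (le_max_left n 0) hn)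

end CoTStructure

theorem stmt_6_general [HasBinaryBiproducts C] (S : Set C)
    (hzero : (0 : C) ∈ S)
    (hsum : ∀ X ∈ S, ∀ Y ∈ S, (X ⊞ Y) ∈ S)
    (hsummand : ∀ {X Y : C}, X ∈ S → (∃ (i : Y ⟶ X) (r : X ⟶ Y), i ≫ r = 𝟙 Y) → Y ∈ S)
    (horth : ∀ X ∈ S, ∀ Y ∈ S, ∀ k : ℤ, 0 < k → ∀ f : X ⟶ Y⟦k⟧, f = 0)
    (hgen : ∀ P : Set C, S ⊆ P →
      (∀ {X Y : C}, X ∈ P → Nonempty (X ≅ Y) → Y ∈ P) →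
      (∀ X ∈ P, X⟦(1 : ℤ)⟧ ∈ P ∧ X⟦(-1 : ℤ)⟧ ∈ P) →
      (∀ T ∈ (distinguishedTriangles : Set (Triangle C)),
        T.obj₁ ∈ P → T.obj₃ ∈ P → T.obj₂ ∈ P) →
      ∀ X : C, X ∈ P) :
    ∃! t : CoTStructure C, t.bounded ∧ t.coheart = S := by
  refine ⟨siltingCoTStructure S horth hzero hgen,
    ⟨bounded_siltingCoTStructure horth hzero hgen,
      coheart_siltingCoTStructure horth hzero hgen hsum hsummand⟩, fun t ⟨hbd, hco⟩ => ?_⟩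
  exact CoTStructure.ext_of_ge_eq (t.ge_eq_siltingGE hbd hco)

/-- Let `S` be a full additive subcategory (closed under isomorphisms, finite direct
sums, and direct summands) of a triangulated category `C` such that
`Hom(S, S'[k]) = 0` for all `S, S' ∈ S` and `k > 0`, and such that `S` generates `C`
as a triangulated category.  Then `S` is the coheart of a unique bounded
co-t-structure on `C`. -/
theorem stmt_6 [HasBinaryBiproducts C] (S : Set C)
    (hiso : ∀ {X Y : C}, X ∈ S → Nonempty (X ≅ Y) → Y ∈ S)
    (hzero : (0 : C) ∈ S)
    (hsum : ∀ X ∈ S, ∀ Y ∈ S, (X ⊞ Y) ∈ S)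
    (hsummand : ∀ {X Y : C}, X ∈ S → (∃ (i : Y ⟶ X) (r : X ⟶ Y), i ≫ r = 𝟙 Y) → Y ∈ S)
    (horth : ∀ X ∈ S, ∀ Y ∈ S, ∀ k : ℤ, 0 < k → ∀ f : X ⟶ Y⟦k⟧, f = 0)
    (hgen : ∀ P : Set C, S ⊆ P →
      (∀ {X Y : C}, X ∈ P → Nonempty (X ≅ Y) → Y ∈ P) →
      (∀ X ∈ P, X⟦(1 : ℤ)⟧ ∈ P ∧ X⟦(-1 : ℤ)⟧ ∈ P) →
      (∀ T ∈ (distinguishedTriangles : Set (Triangle C)),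
        T.obj₁ ∈ P → T.obj₃ ∈ P → T.obj₂ ∈ P) →
      ∀ X : C, X ∈ P) :
    ∃! t : CoTStructure C, t.bounded ∧ t.coheart = S :=
  stmt_6_general S hzero hsum hsummand horth hgen
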